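/- arXiv:2503.19535 — 5 statements merged into one kernel-verified Lean document; each statement's English description precedes it below -/
import Mathlib

section
/- (Lemma 1 of the paper.) Let V be a finite type of nodes and A ⊆ V × V a set of arcs with arc-length function l : V × V → ℝ. There exists a feasible schedule t : V → ℝ (i.e. t(v) − t(u) ≥ l(u,v) for every arc (u,v) ∈ A) if and only if (V, A) contains no directed cycle of positive total length. -/
open Finset

/-- A directed walk of length `k` in the digraph `(V, A)`, given as a function
`v : Fin (k+1) → V` with every consecutive pair an arc of `A`. -/
def IsWalk {V : Type*} (A : Set (V × V)) {k : ℕ} (v : Fin (k + 1) → V) : Prop :=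
  ∀ i : Fin k, (v i.castSucc, v i.succ) ∈ A

/-- The total length of a walk `v : Fin (k+1) → V` with respect to the
arc-length function `l`. -/
def walkLen {V : Type*} (l : V × V → ℝ) {k : ℕ} (v : Fin (k + 1) → V) : ℝ :=
  ∑ i : Fin k, l (v i.castSucc, v i.succ)

section Aux

variable {V : Type*}

/-- Remove the piece of a walk between positions `i` and `i + d`. -/
private def cutWalk (c : ℕ → V) (i d : ℕ) : ℕ → V :=
  fun n => if n ≤ i then c n else c (n + d)

private lemma cutWalk_le (c : ℕ → V) {i d n : ℕ} (h : n ≤ i) : cutWalk c i d n = c n :=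
  if_pos h

private lemma cutWalk_gt (c : ℕ → V) {i d n : ℕ} (h : i < n) : cutWalk c i d n = c (n + d) :=
  if_neg (by omega)

private lemma cutWalk_shift (c : ℕ → V) {i j : ℕ} (hij : i < j) (hc : c i = c j) :
    ∀ x, cutWalk c i (j - i) (i + x) = c (j + x) := by
  intro x
  rcases x with _ | x
  · rw [cutWalk_le c (by omega)]
    simpa using hc
  · rw [cutWalk_gt c (by omega)]
    congr 1
    omega

/-- Decomposition of a walk's length when `c i = c j` for `i < j < k`:
the inner closed part plus the cut walk. -/
private lemma decomp (l : V × V → ℝ) (c : ℕ → V) {i j k : ℕ} (hij : i < j) (hjk : j < k)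
    (hc : c i = c j) :
    ∑ n ∈ Finset.range k, l (c n, c (n + 1)) =
      (∑ n ∈ Finset.range (j - i), l (c (i + n), c (i + n + 1))) +
        ∑ n ∈ Finset.range (i + (k - j)),
          l (cutWalk c i (j - i) n, cutWalk c i (j - i) (n + 1)) := by
  have hk : k = i + (j - i) + (k - j) := by omega
  conv_lhs => rw [hk]
  rw [Finset.sum_range_add, Finset.sum_range_add, Finset.sum_range_add]
  have hj : i + (j - i) = j := by omega
  rw [hj]
  have h1 : ∀ n ∈ Finset.range i,
      l (cutWalk c i (j - i) n, cutWalk c i (j - i) (n + 1)) = l (c n, c (n + 1)) := by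
    intro n hn
    rw [Finset.mem_range] at hn
    rw [cutWalk_le c (by omega), cutWalk_le c (by omega)]
  have h2 : ∀ x ∈ Finset.range (k - j),
      l (cutWalk c i (j - i) (i + x), cutWalk c i (j - i) (i + x + 1)) =
        l (c (j + x), c (j + x + 1)) := by
    intro x _
    rw [cutWalk_shift c hij hc x, show i + x + 1 = i + (x + 1) by omega,
      cutWalk_shift c hij hc (x + 1), Nat.add_assoc]
  rw [Finset.sum_congr rfl h1, Finset.sum_congr rfl h2]
  ring

private lemma cutWalk_isWalk {A : Set (V × V)} (c : ℕ → V) {i j k : ℕ} (hij : i < j)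
    (hjk : j < k) (hc : c i = c j) (hw : ∀ n < k, (c n, c (n + 1)) ∈ A) :
    ∀ n < i + (k - j), (cutWalk c i (j - i) n, cutWalk c i (j - i) (n + 1)) ∈ A := by
  intro n hn
  rcases lt_or_ge n i with h | h
  · rw [cutWalk_le c (by omega), cutWalk_le c (by omega)]
    exact hw n (by omega)
  · obtain ⟨x, rfl⟩ : ∃ x, n = i + x := ⟨n - i, by omega⟩
    rw [cutWalk_shift c hij hc x, show i + x + 1 = i + (x + 1) by omega,
      cutWalk_shift c hij hc (x + 1)]
    exact hw (j + x) (by omega)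

variable [Fintype V]

/-- If there is no positive directed cycle, every closed directed walk has
nonpositive total length. -/
private lemma closed_nonpos {A : Set (V × V)} {l : V × V → ℝ}
    (hnc : ¬ ∃ (m : ℕ) (c : Fin (m + 1) → V), IsWalk A c ∧ 1 ≤ m ∧
        c 0 = c (Fin.last m) ∧
        Function.Injective (fun i : Fin m => c i.castSucc) ∧
        0 < walkLen l c) :
    ∀ k : ℕ, ∀ c : ℕ → V, (∀ i < k, (c i, c (i + 1)) ∈ A) → 1 ≤ k → c 0 = c k →
      ∑ n ∈ Finset.range k, l (c n, c (n + 1)) ≤ 0 := by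
  intro k
  induction k using Nat.strong_induction_on with
  | _ k ih =>
  intro c hw hk hcl
  by_cases hinj : ∀ a b, a < k → b < k → c a = c b → a = b
  · by_contra hpos
    push_neg at hpos
    apply hnc
    refine ⟨k, fun i => c i.val, ?_, hk, ?_, ?_, ?_⟩
    · intro i
      simpa using hw i.val i.isLt
    · simpa using hcl
    · intro a b hab
      simp only [Fin.coe_castSucc] at hab
      exact Fin.ext (hinj a.val b.val a.isLt b.isLt hab)
    · rw [walkLen]
      have : ∑ i : Fin k, l ((fun i : Fin (k+1) => c i.val) i.castSucc,
          (fun i : Fin (k+1) => c i.val) i.succ) = ∑ n ∈ Finset.range k, l (c n, c (n + 1)) := by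
        rw [← Fin.sum_univ_eq_sum_range (fun n => l (c n, c (n + 1))) k]
        simp
      rw [this]
      exact hpos
  · push_neg at hinj
    obtain ⟨a, b, ha, hb, hab, hne⟩ := hinj
    obtain ⟨i, j, hij, hjk, hcij⟩ : ∃ i j, i < j ∧ j < k ∧ c i = c j := by
      rcases lt_or_gt_of_ne hne with h | h
      · exact ⟨a, b, h, hb, hab⟩
      · exact ⟨b, a, h, ha, hab.symm⟩
    rw [decomp l c hij hjk hcij]
    have hS1 : ∑ n ∈ Finset.range (j - i), l (c (i + n), c (i + n + 1)) ≤ 0 := by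
      have := ih (j - i) (by omega) (fun n => c (i + n))
        (fun n hn => hw (i + n) (by omega)) (by omega) (by
          show c (i + 0) = c (i + (j - i))
          rw [show i + (j - i) = j by omega]
          simpa using hcij)
      simpa [Nat.add_assoc] using this
    have hS2 : ∑ n ∈ Finset.range (i + (k - j)),
        l (cutWalk c i (j - i) n, cutWalk c i (j - i) (n + 1)) ≤ 0 := by
      refine ih (i + (k - j)) (by omega) _ (cutWalk_isWalk c hij hjk hcij hw) (by omega) ?_
      rw [cutWalk_le c (Nat.zero_le i), cutWalk_gt c (by omega),
        show i + (k - j) + (j - i) = k by omega]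
      exact hcl
    linarith

/-- If there is no positive directed cycle, every directed walk has length at
most `card V * ∑ |l|`. -/
private lemma walk_bound {A : Set (V × V)} {l : V × V → ℝ}
    (hnc : ¬ ∃ (m : ℕ) (c : Fin (m + 1) → V), IsWalk A c ∧ 1 ≤ m ∧
        c 0 = c (Fin.last m) ∧
        Function.Injective (fun i : Fin m => c i.castSucc) ∧
        0 < walkLen l c) :
    ∀ k : ℕ, ∀ c : ℕ → V, (∀ i < k, (c i, c (i + 1)) ∈ A) →
      ∑ n ∈ Finset.range k, l (c n, c (n + 1)) ≤ (Fintype.card V) * ∑ p : V × V, |l p| := by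
  have hC : (0:ℝ) ≤ ∑ p : V × V, |l p| :=
    Finset.sum_nonneg fun p _ => abs_nonneg _
  have hle : ∀ q : V × V, l q ≤ ∑ p : V × V, |l p| := fun q =>
    le_trans (le_abs_self _) (Finset.single_le_sum (fun p _ => abs_nonneg (l p)) (mem_univ q))
  intro k
  induction k using Nat.strong_induction_on with
  | _ k ih =>
  intro c hw
  rcases le_or_gt k (Fintype.card V) with h | h
  · calc ∑ n ∈ Finset.range k, l (c n, c (n + 1))
        ≤ ∑ n ∈ Finset.range k, ∑ p : V × V, |l p| :=
          Finset.sum_le_sum fun n _ => hle _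
      _ = (k : ℝ) * ∑ p : V × V, |l p| := by
          rw [Finset.sum_const, Finset.card_range, nsmul_eq_mul]
      _ ≤ (Fintype.card V : ℝ) * ∑ p : V × V, |l p| := by
          apply mul_le_mul_of_nonneg_right _ hC
          exact_mod_cast h
  · obtain ⟨x, y, hxy, hcxy⟩ := Fintype.exists_ne_map_eq_of_card_lt
      (fun i : Fin (Fintype.card V + 1) => c i.val) (by simp)
    have hvalne : (x : ℕ) ≠ (y : ℕ) := fun hv => hxy (Fin.ext hv)
    obtain ⟨i, j, hij, hjk, hcij⟩ : ∃ i j, i < j ∧ j < k ∧ c i = c j := by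
      rcases lt_or_gt_of_ne hvalne with h' | h'
      · exact ⟨x, y, h', by omega, hcxy⟩
      · exact ⟨y, x, h', by omega, hcxy.symm⟩
    rw [decomp l c hij hjk hcij]
    have hS1 : ∑ n ∈ Finset.range (j - i), l (c (i + n), c (i + n + 1)) ≤ 0 := by
      have := closed_nonpos hnc (j - i) (fun n => c (i + n))
        (fun n hn => hw (i + n) (by omega)) (by omega) (by
          show c (i + 0) = c (i + (j - i))
          rw [show i + (j - i) = j by omega]
          simpa using hcij)
      simpa [Nat.add_assoc] using this
    have hS2 : ∑ n ∈ Finset.range (i + (k - j)),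
        l (cutWalk c i (j - i) n, cutWalk c i (j - i) (n + 1)) ≤
          (Fintype.card V) * ∑ p : V × V, |l p| :=
      ih (i + (k - j)) (by omega) _ (cutWalk_isWalk c hij hjk hcij hw)
    linarith

end Aux

/-- Lemma 1 of the paper: a feasible schedule exists if and only
if the digraph contains no directed cycle of positive total length. -/
theorem feasible_schedule_exists_iff_no_positive_cycle {V : Type*} [Fintype V]
    (A : Set (V × V)) (l : V × V → ℝ) :
    (∃ t : V → ℝ, ∀ u v : V, (u, v) ∈ A → t v - t u ≥ l (u, v)) ↔
    ¬ ∃ (m : ℕ) (c : Fin (m + 1) → V), IsWalk A c ∧ 1 ≤ m ∧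
        c 0 = c (Fin.last m) ∧
        Function.Injective (fun i : Fin m => c i.castSucc) ∧
        0 < walkLen l c := by
  classical
  constructor
  · rintro ⟨t, ht⟩ ⟨m, c, hw, hm, hclosed, hinj, hpos⟩
    set e : ℕ → V := fun n => c ⟨min n m, by omega⟩ with he
    have hec : ∀ i : Fin m, c i.castSucc = e i.val ∧ c i.succ = e (i.val + 1) := by
      intro i
      constructor
      · show c i.castSucc = c ⟨min i.val m, _⟩
        congr 1
        exact Fin.ext (by simp only [Fin.coe_castSucc]; omega)
      · show c i.succ = c ⟨min (i.val + 1) m, _⟩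
        congr 1
        exact Fin.ext (by simp only [Fin.val_succ]; omega)
    have key : walkLen l c ≤ t (c (Fin.last m)) - t (c 0) := by
      calc walkLen l c ≤ ∑ i : Fin m, (t (c i.succ) - t (c i.castSucc)) :=
            Finset.sum_le_sum fun i _ => ht _ _ (hw i)
        _ = ∑ i : Fin m, (t (e (i.val + 1)) - t (e i.val)) := by
            apply Finset.sum_congr rfl
            intro i _
            rw [(hec i).1, (hec i).2]
        _ = ∑ n ∈ Finset.range m, (t (e (n + 1)) - t (e n)) :=
            Fin.sum_univ_eq_sum_range (fun n => t (e (n + 1)) - t (e n)) m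
        _ = t (e m) - t (e 0) := Finset.sum_range_sub (fun n => t (e n)) m
        _ = t (c (Fin.last m)) - t (c 0) := by
            have h1 : e m = c (Fin.last m) := by
              show c ⟨min m m, _⟩ = c (Fin.last m)
              congr 1
              exact Fin.ext (by simp [Fin.val_last])
            have h2 : e 0 = c 0 := by
              show c ⟨min 0 m, _⟩ = c 0
              congr 1
            rw [h1, h2]
    rw [← hclosed] at key
    linarith
  · intro hnc
    set C : ℝ := ∑ p : V × V, |l p| with hCdef
    set S : V → Set ℝ := fun v =>
      {x | ∃ (k : ℕ) (c : ℕ → V), (∀ i < k, (c i, c (i + 1)) ∈ A) ∧ c k = v ∧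
        ∑ n ∈ Finset.range k, l (c n, c (n + 1)) = x} with hSdef
    have hne : ∀ v, (S v).Nonempty := by
      intro v
      exact ⟨0, 0, fun _ => v, fun i hi => absurd hi (Nat.not_lt_zero i), rfl,
        Finset.sum_range_zero _⟩
    have hbdd : ∀ v, BddAbove (S v) := by
      intro v
      refine ⟨(Fintype.card V) * C, ?_⟩
      rintro x ⟨k, c, hwc, -, rfl⟩
      exact walk_bound hnc k c hwc
    refine ⟨fun v => sSup (S v), ?_⟩
    intro u v huv
    have hstep : sSup (S u) ≤ sSup (S v) - l (u, v) := by
      apply csSup_le (hne u)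
      rintro x ⟨k, c, hwc, hcu, rfl⟩
      have hmem : (∑ n ∈ Finset.range k, l (c n, c (n + 1))) + l (u, v) ∈ S v := by
        refine ⟨k + 1, fun n => if n ≤ k then c n else v, ?_, ?_, ?_⟩
        · intro n hn
          rcases lt_or_ge n k with h | h
          · simp only [if_pos (by omega : n ≤ k), if_pos (by omega : n + 1 ≤ k)]
            exact hwc n h
          · have hnk : n = k := by omega
            subst hnk
            simp only [if_pos (le_refl n), if_neg (by omega : ¬ n + 1 ≤ n)]
            rw [hcu]
            exact huv
        · simp
        · rw [Finset.sum_range_succ]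
          congr 1
          · apply Finset.sum_congr rfl
            intro n hn
            rw [Finset.mem_range] at hn
            simp only [if_pos (by omega : n ≤ k), if_pos (by omega : n + 1 ≤ k)]
          · simp only [if_pos (le_refl k), if_neg (by omega : ¬ k + 1 ≤ k), hcu]
      have := le_csSup (hbdd v) hmem
      linarith
    linarith [hstep]
end

section
/- Let V be a finite type of nodes and A ⊆ V × V a set of arcs with arc-length function l : V × V → ℝ, and suppose (V, A) contains no closed directed walk of positive total length. Then for every directed walk from a node s to a node u there exists a directed path (a directed walk with pairwise distinct nodes) from s to u whose total length is greater than or equal to the total length of the walk. -/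
open Finset

lemma isWalk_step {V : Type*} {A : Set (V × V)} {k : ℕ} {w : Fin (k + 1) → V}
    (hw : IsWalk A w) (n : ℕ) (hn : n < k) :
    (w ⟨n, by omega⟩, w ⟨n + 1, by omega⟩) ∈ A := by
  have := hw ⟨n, hn⟩
  simpa [Fin.castSucc_mk, Fin.succ_mk] using this

/-- Splice out a repeated segment from a non-injective walk, without decreasing
the total length (using that closed walks have nonpositive length). -/
lemma splice {V : Type*} (A : Set (V × V)) (l : V × V → ℝ)
    (hnopos : ¬ ∃ (m : ℕ) (c : Fin (m + 1) → V), IsWalk A c ∧ 1 ≤ m ∧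
        c 0 = c (Fin.last m) ∧ 0 < walkLen l c)
    (k : ℕ) (w : Fin (k + 1) → V) (hw : IsWalk A w)
    (hninj : ¬ Function.Injective w) :
    ∃ k', k' < k ∧ ∃ w' : Fin (k' + 1) → V, IsWalk A w' ∧ w' 0 = w 0 ∧
      w' (Fin.last k') = w (Fin.last k) ∧ walkLen l w ≤ walkLen l w' := by
  rw [Function.not_injective_iff] at hninj
  obtain ⟨a, b, hab, hne⟩ := hninj
  obtain ⟨i, j, hij, hjk, heq⟩ : ∃ i j : ℕ, ∃ (hij : i < j) (hjk : j ≤ k),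
      w ⟨i, by omega⟩ = w ⟨j, by omega⟩ := by
    rcases Nat.lt_trichotomy a.val b.val with h | h | h
    · exact ⟨a.val, b.val, h, Nat.lt_succ_iff.mp b.isLt, by simpa using hab⟩
    · exact absurd (Fin.ext h) hne
    · exact ⟨b.val, a.val, h, Nat.lt_succ_iff.mp a.isLt, by simpa using hab.symm⟩
  set d := j - i with hd
  set k' := k - d with hk'
  have hd1 : 1 ≤ d := by omega
  have hkd : d ≤ k := by omega
  have hkk : k' + d = k := by omega
  have hik' : i ≤ k' := by omega
  -- step lengths as a function of ℕ
  set F : ℕ → ℝ := fun n => if h : n < k then l (w ⟨n, by omega⟩, w ⟨n + 1, by omega⟩) else 0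
    with hF
  have hFval : ∀ (n : ℕ) (hn : n < k), F n = l (w ⟨n, by omega⟩, w ⟨n + 1, by omega⟩) := by
    intro n hn
    simp only [hF, dif_pos hn]
  have hwF : walkLen l w = ∑ n ∈ Finset.range k, F n := by
    rw [walkLen, ← Fin.sum_univ_eq_sum_range]
    refine Finset.sum_congr rfl fun t _ => ?_
    rw [hFval t.val t.isLt]
    congr 1
  -- the cycle has nonpositive length
  have hcyc : ∑ s ∈ Finset.range d, F (i + s) ≤ 0 := by
    by_contra hpos
    push_neg at hpos
    apply hnopos
    refine ⟨d, fun t => w ⟨i + t.val, by omega⟩, ?_, hd1, ?_, ?_⟩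
    · intro t
      exact isWalk_step hw (i + t.val) (by omega)
    · simp only [Fin.val_zero, Nat.add_zero, Fin.val_last]
      rw [show (⟨i + d, by omega⟩ : Fin (k+1)) = ⟨j, by omega⟩ from by
        simp only [Fin.mk.injEq]; omega]
      exact heq
    · have : walkLen l (fun t : Fin (d+1) => w ⟨i + t.val, by omega⟩)
          = ∑ s ∈ Finset.range d, F (i + s) := by
        rw [walkLen, ← Fin.sum_univ_eq_sum_range]
        refine Finset.sum_congr rfl fun t _ => ?_
        rw [hFval (i + t.val) (by omega)]
        congr 1
      rw [this]
      exact hpos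
  -- the spliced walk
  refine ⟨k', by omega, fun t => if t.val < i then w ⟨t.val, by omega⟩
    else w ⟨t.val + d, by omega⟩, ?_, ?_, ?_, ?_⟩
  · -- IsWalk
    intro t
    have htv : t.val < k' := t.isLt
    simp only [Fin.coe_castSucc, Fin.val_succ]
    rcases Nat.lt_trichotomy (t.val + 1) i with h1 | h1 | h1
    · rw [if_pos (show t.val < i by omega), if_pos (show t.val + 1 < i by omega)]
      exact isWalk_step hw t.val (by omega)
    · rw [if_pos (show t.val < i by omega), if_neg (show ¬ t.val + 1 < i by omega)]
      rw [show (⟨t.val + 1 + d, by omega⟩ : Fin (k+1)) = ⟨j, by omega⟩ from by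
        simp only [Fin.mk.injEq]; omega]
      rw [← heq]
      rw [show (⟨i, by omega⟩ : Fin (k+1)) = ⟨t.val + 1, by omega⟩ from by
        simp only [Fin.mk.injEq]; omega]
      exact isWalk_step hw t.val (by omega)
    · rw [if_neg (show ¬ t.val < i by omega), if_neg (show ¬ t.val + 1 < i by omega)]
      rw [show (⟨t.val + 1 + d, by omega⟩ : Fin (k+1)) = ⟨t.val + d + 1, by omega⟩ from by
        simp only [Fin.mk.injEq]; omega]
      exact isWalk_step hw (t.val + d) (by omega)
  · -- start
    simp only [Fin.val_zero]
    by_cases h0 : 0 < i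
    · simp only [h0, ↓reduceIte]
      exact congrArg w (Fin.ext (by simp))
    · simp only [h0, ↓reduceIte]
      rw [show ((⟨0 + d, by omega⟩ : Fin (k+1))) = ⟨j, by omega⟩ from by
        simp only [Fin.mk.injEq]; omega]
      rw [← heq]
      exact congrArg w (Fin.ext (by simp; omega))
  · -- end
    simp only [Fin.val_last]
    rw [if_neg (show ¬ k' < i by omega)]
    exact congrArg w (Fin.ext (by simp [Fin.val_last]; omega))
  · -- length
    have hw'F : walkLen l (fun t : Fin (k'+1) => if t.val < i then w ⟨t.val, by omega⟩
        else w ⟨t.val + d, by omega⟩)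
        = ∑ n ∈ Finset.range k', (if n < i then F n else F (n + d)) := by
      rw [walkLen, ← Fin.sum_univ_eq_sum_range]
      refine Finset.sum_congr rfl fun t _ => ?_
      have htv : t.val < k' := t.isLt
      simp only [Fin.coe_castSucc, Fin.val_succ]
      rcases Nat.lt_trichotomy (t.val + 1) i with h1 | h1 | h1
      · rw [if_pos (show t.val < i by omega), if_pos (show t.val + 1 < i by omega),
          if_pos (show t.val < i by omega), hFval t.val (by omega)]
      · rw [if_pos (show t.val < i by omega), if_neg (show ¬ t.val + 1 < i by omega),
          if_pos (show t.val < i by omega), hFval t.val (by omega)]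
        rw [show (⟨t.val + 1 + d, by omega⟩ : Fin (k+1)) = ⟨j, by omega⟩ from by
          simp only [Fin.mk.injEq]; omega]
        rw [← heq]
        rw [show (⟨i, by omega⟩ : Fin (k+1)) = ⟨t.val + 1, by omega⟩ from by
          simp only [Fin.mk.injEq]; omega]
      · rw [if_neg (show ¬ t.val < i by omega), if_neg (show ¬ t.val + 1 < i by omega),
          if_neg (show ¬ t.val < i by omega), hFval (t.val + d) (by omega)]
        rw [show (⟨t.val + 1 + d, by omega⟩ : Fin (k+1)) = ⟨t.val + d + 1, by omega⟩ from by
          simp only [Fin.mk.injEq]; omega]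
    rw [hwF, hw'F]
    have e1 : ∑ n ∈ Finset.range k, F n
        = (∑ n ∈ Finset.range i, F n) + ((∑ s ∈ Finset.range d, F (i + s))
          + ∑ m ∈ Finset.range (k' - i), F (i + (d + m))) := by
      rw [show k = i + (d + (k' - i)) by omega, Finset.sum_range_add, Finset.sum_range_add]
    have e2 : ∑ n ∈ Finset.range k', (if n < i then F n else F (n + d))
        = (∑ n ∈ Finset.range i, F n) + ∑ m ∈ Finset.range (k' - i), F (i + (d + m)) := by
      obtain ⟨q, hq⟩ : ∃ q, q = k' - i := ⟨_, rfl⟩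
      rw [← hq, show k' = i + q from by omega, Finset.sum_range_add]
      congr 1
      · exact Finset.sum_congr rfl fun n hn => if_pos (Finset.mem_range.mp hn)
      · refine Finset.sum_congr rfl fun m _ => ?_
        rw [if_neg (by omega)]
        congr 1
        omega
    rw [e1, e2]
    have := hcyc
    linarith

/-- if there is no closed directed walk of positive total length,
then every directed walk from `s` to `u` can be replaced by a directed path
(walk with pairwise distinct nodes) from `s` to `u` of total length at least
that of the walk. -/
theorem walk_to_path_of_no_pos_closed_walk {V : Type*} [Fintype V]
    (A : Set (V × V)) (l : V × V → ℝ)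
    (hnopos : ¬ ∃ (m : ℕ) (c : Fin (m + 1) → V), IsWalk A c ∧ 1 ≤ m ∧
        c 0 = c (Fin.last m) ∧ 0 < walkLen l c)
    (s u : V) (k : ℕ) (w : Fin (k + 1) → V) (hw : IsWalk A w)
    (hs : w 0 = s) (hu : w (Fin.last k) = u) :
    ∃ (m : ℕ) (p : Fin (m + 1) → V), IsWalk A p ∧ Function.Injective p ∧
      p 0 = s ∧ p (Fin.last m) = u ∧ walkLen l w ≤ walkLen l p := by
  induction k using Nat.strong_induction_on with
  | _ k ih =>
    by_cases hinj : Function.Injective w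
    · exact ⟨k, w, hw, hinj, hs, hu, le_refl _⟩
    · obtain ⟨k', hk', w', hw', h0, hl, hle⟩ := splice A l hnopos k w hw hinj
      obtain ⟨m, p, hp, hpinj, hp0, hpl, hple⟩ :=
        ih k' hk' w' hw' (h0.trans hs) (hl.trans hu)
      exact ⟨m, p, hp, hpinj, hp0, hpl, hle.trans hple⟩
end

section
/- Let V be a finite type of nodes, A ⊆ V × V a set of arcs with arc-length function l : V × V → ℝ, and s ∈ V a node with no incoming arcs such that every node of V is reachable from s by a directed walk. Suppose (V, A) contains no closed directed walk of positive total length. Define t(u) to be the maximum total length of a directed path from s to u (this maximum exists, since V is finite, every node is reachable, and directed paths have pairwise distinct nodes). Then t(s) = 0 and t is a feasible schedule: t(v) − t(u) ≥ l(u,v) for every arc (u,v) ∈ A. -/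
open Finset

/-- The set of total lengths of directed paths (walks with pairwise distinct
nodes) from `s` to `u` in `(V, A)`. -/
def pathLens {V : Type*} (A : Set (V × V)) (l : V × V → ℝ) (s u : V) : Set ℝ :=
  {x | ∃ (k : ℕ) (p : Fin (k + 1) → V), IsWalk A p ∧ Function.Injective p ∧
        p 0 = s ∧ p (Fin.last k) = u ∧ walkLen l p = x}

/-- with `s` having no incoming arcs, every node reachable from
`s`, and no positive closed walk, the longest-path values `t u` (assumed to be
the maximum of `pathLens A l s u`) satisfy `t s = 0` and form a feasible
schedule. -/
theorem longest_path_schedule_feasible {V : Type*} [Fintype V]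
    (A : Set (V × V)) (l : V × V → ℝ) (s : V)
    (hnoin : ∀ v : V, (v, s) ∉ A)
    (hreach : ∀ u : V, ∃ (k : ℕ) (w : Fin (k + 1) → V),
      IsWalk A w ∧ w 0 = s ∧ w (Fin.last k) = u)
    (hnopos : ¬ ∃ (m : ℕ) (c : Fin (m + 1) → V), IsWalk A c ∧ 1 ≤ m ∧
        c 0 = c (Fin.last m) ∧ 0 < walkLen l c)
    (t : V → ℝ) (ht : ∀ u : V, IsGreatest (pathLens A l s u) (t u)) :
    t s = 0 ∧ ∀ u v : V, (u, v) ∈ A → t v - t u ≥ l (u, v) := by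
  constructor
  · -- t s = 0
    obtain ⟨⟨k, p, hpw, hpinj, hp0, hplast, hpval⟩, hub⟩ := ht s
    have hk0 : k = 0 := by
      have h := hpinj (hp0.trans hplast.symm)
      have := congrArg Fin.val h
      simp at this
      omega
    subst hk0
    have : walkLen l p = 0 := by simp [walkLen]
    linarith
  · intro u v huv
    obtain ⟨k, p, hpw, hpinj, hp0, hplast, hpval⟩ := (ht u).1
    -- Extended node function and edge-length function
    set P : ℕ → V := fun a => p ⟨min a k, by omega⟩ with hP
    set g : ℕ → ℝ := fun a => l (P a, P (a + 1)) with hg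
    have key : ∀ (a : ℕ) (h : a < k), (P a, P (a + 1)) ∈ A := by
      intro a h
      have e1 : P a = p (⟨a, h⟩ : Fin k).castSucc :=
        congrArg p (Fin.ext (by simp; omega))
      have e2 : P (a + 1) = p (⟨a, h⟩ : Fin k).succ :=
        congrArg p (Fin.ext (by simp; omega))
      rw [e1, e2]; exact hpw _
    have hplen : walkLen l p = ∑ i ∈ Finset.range k, g i := by
      rw [Finset.sum_range g, walkLen]
      refine Finset.sum_congr rfl fun i _ => ?_
      have := i.isLt
      have e1 : p i.castSucc = P i.val :=
        congrArg p (Fin.ext (by simp only [Fin.coe_castSucc, P]; omega))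
      have e2 : p i.succ = P (i.val + 1) :=
        congrArg p (Fin.ext (by simp only [Fin.val_succ, P]; omega))
      rw [e1, e2]
    by_cases hv : v ∈ Set.range p
    · -- v already on the path : use prefix path and closed-walk nonpositivity
      obtain ⟨j, hpj⟩ := hv
      have hj : (j : ℕ) < k + 1 := j.isLt
      set jn : ℕ := (j : ℕ) with hjn
      set d : ℕ := k - jn with hd
      have hjd : jn + d = k := by omega
      -- prefix path from s to v
      set r : Fin (jn + 1) → V := fun i => P i.val with hr
      have hrw : IsWalk A r := by
        intro i
        have hik := i.isLt
        have e1 : r i.castSucc = P i.val := by simp [r]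
        have e2 : r i.succ = P (i.val + 1) := by simp [r]
        rw [e1, e2]
        exact key i.val (by omega)
      have hrinj : Function.Injective r := by
        intro a b hab
        have ha := a.isLt
        have hb := b.isLt
        have := congrArg Fin.val (hpinj hab)
        simp at this
        exact Fin.ext (by omega)
      have hr0 : r 0 = s := by
        rw [← hp0]; exact congrArg p (Fin.ext (by simp))
      have hrlast : r (Fin.last jn) = v := by
        rw [← hpj]; exact congrArg p (Fin.ext (by simp; omega))
      have hrlen : walkLen l r = ∑ i ∈ Finset.range jn, g i := by
        rw [Finset.sum_range g, walkLen]
        refine Finset.sum_congr rfl fun i _ => ?_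
        have := i.isLt
        have e1 : r i.castSucc = P i.val := by simp [r]
        have e2 : r i.succ = P (i.val + 1) := by simp [r]
        rw [e1, e2]
      have htv : walkLen l r ≤ t v :=
        (ht v).2 ⟨jn, r, hrw, hrinj, hr0, hrlast, rfl⟩
      -- closed walk from v back to v through u
      set c : Fin (d + 1 + 1) → V := Fin.snoc (fun i : Fin (d + 1) => P (jn + i.val)) v with hc
      have hPk : P (jn + d) = u := by
        rw [← hplast]
        exact congrArg p (Fin.ext (by simp; omega))
      have hc0 : c 0 = v := by
        have : (0 : Fin (d + 1 + 1)) = Fin.castSucc 0 := rfl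
        rw [this, hc, Fin.snoc_castSucc, ← hpj]
        exact congrArg p (Fin.ext (by simp; omega))
      have hclast : c (Fin.last (d + 1)) = v := by rw [hc, Fin.snoc_last]
      have hcw : IsWalk A c := by
        intro i
        induction i using Fin.lastCases with
        | last =>
          rw [Fin.succ_last, hc, Fin.snoc_last, Fin.snoc_castSucc]
          simpa [hPk] using huv
        | cast i =>
          rw [Fin.succ_castSucc, hc, Fin.snoc_castSucc, Fin.snoc_castSucc]
          have hik := i.isLt
          simp only [Fin.coe_castSucc, Fin.val_succ]
          have e : jn + (i.val + 1) = (jn + i.val) + 1 := by omega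
          rw [e]
          exact key (jn + i.val) (by omega)
      have hclen : walkLen l c = (∑ i ∈ Finset.range d, g (jn + i)) + l (u, v) := by
        rw [walkLen, Fin.sum_univ_castSucc]
        congr 1
        · rw [Finset.sum_range]
          refine Finset.sum_congr rfl fun i _ => ?_
          rw [Fin.succ_castSucc, hc, Fin.snoc_castSucc, Fin.snoc_castSucc]
          simp only [Fin.coe_castSucc, Fin.val_succ, hg]
          have e : jn + (i.val + 1) = (jn + i.val) + 1 := by omega
          rw [e]
        · rw [Fin.succ_last, hc, Fin.snoc_last, Fin.snoc_castSucc]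
          simp [hPk]
      have hcle : walkLen l c ≤ 0 := by
        by_contra h
        push_neg at h
        exact hnopos ⟨d + 1, c, hcw, by omega, by rw [hc0, hclast], h⟩
      -- split walkLen p
      have hsplit : walkLen l p = walkLen l r + ∑ i ∈ Finset.range d, g (jn + i) := by
        rw [hplen, hrlen, ← hjd, Finset.sum_range_add]
      linarith
    · -- v not on the path : extend the path by the arc (u, v)
      set q : Fin (k + 1 + 1) → V := Fin.snoc p v with hq
      have hq0 : q 0 = s := by
        have : (0 : Fin (k + 1 + 1)) = Fin.castSucc 0 := rfl
        rw [this, hq, Fin.snoc_castSucc]; exact hp0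
      have hqlast : q (Fin.last (k + 1)) = v := by rw [hq, Fin.snoc_last]
      have hqw : IsWalk A q := by
        intro i
        induction i using Fin.lastCases with
        | last =>
          rw [Fin.succ_last, hq, Fin.snoc_last, Fin.snoc_castSucc, hplast]
          exact huv
        | cast i =>
          rw [Fin.succ_castSucc, hq, Fin.snoc_castSucc, Fin.snoc_castSucc]
          exact hpw i
      have hqinj : Function.Injective q := by
        intro a b hab
        induction a using Fin.lastCases with
        | last =>
          induction b using Fin.lastCases with
          | last => rfl
          | cast b =>
            rw [hq, Fin.snoc_last, Fin.snoc_castSucc] at hab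
            exact absurd ⟨b, hab.symm⟩ hv
        | cast a =>
          induction b using Fin.lastCases with
          | last =>
            rw [hq, Fin.snoc_last, Fin.snoc_castSucc] at hab
            exact absurd ⟨a, hab⟩ hv
          | cast b =>
            rw [hq, Fin.snoc_castSucc, Fin.snoc_castSucc] at hab
            exact congrArg Fin.castSucc (hpinj hab)
      have hqlen : walkLen l q = walkLen l p + l (u, v) := by
        rw [walkLen, Fin.sum_univ_castSucc]
        congr 1
        · refine Finset.sum_congr rfl fun i _ => ?_
          rw [Fin.succ_castSucc, hq, Fin.snoc_castSucc, Fin.snoc_castSucc]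
        · rw [Fin.succ_last, hq, Fin.snoc_last, Fin.snoc_castSucc, hplast]
      have htv : walkLen l q ≤ t v :=
        (ht v).2 ⟨k + 1, q, hqw, hqinj, hq0, hqlast, rfl⟩
      linarith
end

section
/- Let V be a finite type of nodes, A ⊆ V × V a set of arcs with arc-length function l : V × V → ℝ, and s ∈ V a node such that every node of V is reachable from s by a directed walk, and suppose (V, A) contains no closed directed walk of positive total length. Define t(u) as the maximum total length of a directed path from s to u. Then for every feasible schedule t' : V → ℝ with t'(s) ≥ 0 one has t'(u) ≥ t(u) for all u ∈ V; that is, the longest-path schedule is the pointwise minimum among all feasible schedules vanishing (or nonnegative) at s. -/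
open Finset

lemma walkLen_le_sub {V : Type*} (l : V × V → ℝ) (t' : V → ℝ) :
    ∀ (k : ℕ) (p : Fin (k+1) → V),
      (∀ i : Fin k, l (p i.castSucc, p i.succ) ≤ t' (p i.succ) - t' (p i.castSucc)) →
      walkLen l p ≤ t' (p (Fin.last k)) - t' (p 0)
  | 0, p, _ => by simp [walkLen]
  | (k+1), p, h => by
    have ih := walkLen_le_sub l t' k (p ∘ Fin.castSucc) (fun i => by
      simpa [Function.comp] using h i.castSucc)
    have hw : walkLen l p = walkLen l (p ∘ Fin.castSucc) +
        l (p (Fin.last k).castSucc, p (Fin.last k).succ) := by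
      rw [walkLen, Fin.sum_univ_castSucc]
      simp [walkLen, Function.comp]
    have hlast := h (Fin.last k)
    have h0 : (p ∘ Fin.castSucc) 0 = p 0 := rfl
    have hL : (p ∘ Fin.castSucc) (Fin.last k) = p (Fin.last k).castSucc := rfl
    have hS : (Fin.last k).succ = Fin.last (k+1) := rfl
    rw [h0, hL] at ih
    rw [hS] at hlast hw
    rw [hw]
    linarith

/-- with every node reachable from `s` and no positive closed
walk, the longest-path schedule `t` is the pointwise minimum among all feasible
schedules `t'` with `t' s ≥ 0`. -/
theorem longest_path_schedule_pointwise_min {V : Type*} [Fintype V]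
    (A : Set (V × V)) (l : V × V → ℝ) (s : V)
    (hreach : ∀ u : V, ∃ (k : ℕ) (w : Fin (k + 1) → V),
      IsWalk A w ∧ w 0 = s ∧ w (Fin.last k) = u)
    (hnopos : ¬ ∃ (m : ℕ) (c : Fin (m + 1) → V), IsWalk A c ∧ 1 ≤ m ∧
        c 0 = c (Fin.last m) ∧ 0 < walkLen l c)
    (t : V → ℝ) (ht : ∀ u : V, IsGreatest (pathLens A l s u) (t u)) :
    ∀ t' : V → ℝ, (∀ u v : V, (u, v) ∈ A → t' v - t' u ≥ l (u, v)) →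
      t' s ≥ 0 → ∀ u : V, t' u ≥ t u := by
  intro t' hfeas hs u
  obtain ⟨k, p, hw, _, hp0, hpl, hlen⟩ := (ht u).1
  have key := walkLen_le_sub l t' k p (fun i => hfeas _ _ (hw i))
  rw [hp0, hpl] at key
  rw [← hlen]
  linarith
end

section
/- Let V be a finite type of nodes, A ⊆ V × V a set of arcs with nonnegative arc-length function l : V × V → [0, ∞), and s ∈ V a node with no incoming arcs such that every node of V is reachable from s by a directed walk; suppose (V, A) contains no closed directed walk of positive total length. Define t(u) as the maximum total length of a directed path from s to u, and let c : (V → ℝ) → ℝ be monotone non-decreasing (if t₁(u) ≤ t₂(u) for all u, then c(t₁) ≤ c(t₂)). Then t is a componentwise nonnegative feasible schedule and c(t) ≤ c(t') for every componentwise nonnegative feasible schedule t' : V → ℝ; that is, the longest-path schedule is a minimum-cost feasible schedule. -/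
open Finset

lemma walk_arc {V : Type*} {A : Set (V × V)} {k : ℕ} {p : Fin (k+1) → V}
    (hp : IsWalk A p) {j : ℕ} (hj : j < k) :
    (p ⟨j, by omega⟩, p ⟨j+1, by omega⟩) ∈ A := hp ⟨j, hj⟩

lemma walkLen_eq {V : Type*} (l : V × V → ℝ) {k : ℕ} (p : Fin (k+1) → V) :
    walkLen l p = ∑ j ∈ Finset.range k,
      if h : j < k then l (p ⟨j, by omega⟩, p ⟨j+1, by omega⟩) else 0 := by
  rw [walkLen, ← Fin.sum_univ_eq_sum_range]
  apply Finset.sum_congr rfl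
  intro i _
  rw [dif_pos i.isLt]
  have h1 : (⟨(i : ℕ), by omega⟩ : Fin (k+1)) = i.castSucc := by ext; simp
  have h2 : (⟨(i : ℕ)+1, by omega⟩ : Fin (k+1)) = i.succ := by ext; simp
  rw [h1, h2]

lemma walkLen_nonneg {V : Type*} {l : V × V → ℝ} (hl : ∀ a, 0 ≤ l a)
    {k : ℕ} (p : Fin (k+1) → V) : 0 ≤ walkLen l p :=
  Finset.sum_nonneg fun _ _ => hl _

lemma walkLen_le {V : Type*} {A : Set (V × V)} {l : V × V → ℝ} {t' : V → ℝ}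
    (hfeas : ∀ u v : V, (u, v) ∈ A → t' v - t' u ≥ l (u, v))
    {k : ℕ} {p : Fin (k+1) → V} (hp : IsWalk A p) :
    walkLen l p ≤ t' (p (Fin.last k)) - t' (p 0) := by
  induction k with
  | zero => simp [walkLen]
  | succ n ih =>
    have hq : IsWalk A (p ∘ Fin.castSucc) := by
      intro i
      have := hp i.castSucc
      rw [Fin.succ_castSucc] at this
      exact this
    have hlen : walkLen l p = walkLen l (p ∘ Fin.castSucc)
        + l (p (Fin.last n).castSucc, p (Fin.last (n+1))) := by
      rw [walkLen, Fin.sum_univ_castSucc]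
      congr 1
    have harc := hp (Fin.last n)
    rw [Fin.succ_last] at harc
    have h1 := ih hq
    have h2 := hfeas _ _ harc
    simp only [Function.comp] at h1
    rw [hlen]
    have : p (Fin.castSucc 0) = p 0 := by norm_num
    rw [this] at h1
    linarith

lemma isWalk_snoc {V : Type*} {A : Set (V × V)} {k : ℕ} {p : Fin (k+1) → V}
    (hp : IsWalk A p) {v : V} (hv : (p (Fin.last k), v) ∈ A) :
    IsWalk A (Fin.snoc p v) := by
  intro i
  refine Fin.lastCases ?_ ?_ i
  · rw [Fin.succ_last, Fin.snoc_last, Fin.snoc_castSucc]; exact hv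
  · intro j
    rw [Fin.succ_castSucc, Fin.snoc_castSucc, Fin.snoc_castSucc]
    exact hp j

lemma walkLen_snoc {V : Type*} (l : V × V → ℝ) {k : ℕ} (p : Fin (k+1) → V) (v : V) :
    walkLen l (Fin.snoc p v) = walkLen l p + l (p (Fin.last k), v) := by
  rw [walkLen, walkLen, Fin.sum_univ_castSucc]
  congr 1
  · apply Finset.sum_congr rfl
    intro j _
    rw [Fin.succ_castSucc, Fin.snoc_castSucc, Fin.snoc_castSucc]
  · rw [Fin.succ_last, Fin.snoc_last, Fin.snoc_castSucc]

lemma snoc_inj {V : Type*} {k : ℕ} {p : Fin (k+1) → V} (hp : Function.Injective p)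
    {v : V} (hv : ∀ i, p i ≠ v) : Function.Injective (Fin.snoc p v) := by
  intro a b hab
  rcases Fin.eq_castSucc_or_eq_last a with ⟨a', rfl⟩ | rfl <;>
    rcases Fin.eq_castSucc_or_eq_last b with ⟨b', rfl⟩ | rfl
  · simp only [Fin.snoc_castSucc] at hab
    rw [hp hab]
  · simp only [Fin.snoc_castSucc, Fin.snoc_last] at hab
    exact absurd hab (hv a')
  · simp only [Fin.snoc_castSucc, Fin.snoc_last] at hab
    exact absurd hab.symm (hv b')
  · rfl

/-- with nonnegative arc lengths, `s` with no incoming arcs and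
every node reachable from `s`, and no positive closed walk, the longest-path
schedule `t` is a componentwise nonnegative feasible schedule of minimum cost
with respect to any monotone non-decreasing cost function `c`. -/
theorem longest_path_schedule_min_cost {V : Type*} [Fintype V]
    (A : Set (V × V)) (l : V × V → ℝ) (hl : ∀ a : V × V, 0 ≤ l a) (s : V)
    (hnoin : ∀ v : V, (v, s) ∉ A)
    (hreach : ∀ u : V, ∃ (k : ℕ) (w : Fin (k + 1) → V),
      IsWalk A w ∧ w 0 = s ∧ w (Fin.last k) = u)
    (hnopos : ¬ ∃ (m : ℕ) (c : Fin (m + 1) → V), IsWalk A c ∧ 1 ≤ m ∧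
        c 0 = c (Fin.last m) ∧ 0 < walkLen l c)
    (t : V → ℝ) (ht : ∀ u : V, IsGreatest (pathLens A l s u) (t u))
    (c : (V → ℝ) → ℝ)
    (hc : ∀ t₁ t₂ : V → ℝ, (∀ u : V, t₁ u ≤ t₂ u) → c t₁ ≤ c t₂) :
    (∀ u : V, 0 ≤ t u) ∧
    (∀ u v : V, (u, v) ∈ A → t v - t u ≥ l (u, v)) ∧
    (∀ t' : V → ℝ, (∀ u v : V, (u, v) ∈ A → t' v - t' u ≥ l (u, v)) →
      (∀ u : V, 0 ≤ t' u) → c t ≤ c t') := by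
  have hnn : ∀ u, 0 ≤ t u := by
    intro u
    obtain ⟨k, p, hw, hinj, h0, hlast, hlen⟩ := (ht u).1
    rw [← hlen]
    exact walkLen_nonneg hl p
  have hfeas : ∀ u v : V, (u, v) ∈ A → t v - t u ≥ l (u, v) := by
    intro u v huv
    obtain ⟨k, p, hw, hinj, h0, hlast, hlen⟩ := (ht u).1
    by_cases hvmem : ∃ i : Fin (k+1), p i = v
    · -- v already on the path: closed-walk argument
      obtain ⟨i, hi⟩ := hvmem
      have hik : i.val ≤ k := by omega
      set m := k - i.val with hm
      -- suffix of p from index i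
      let suf : Fin (m+1) → V := fun j => p ⟨i.val + j.val, by omega⟩
      have hsufw : IsWalk A suf := by
        intro j
        exact walk_arc hw (j := i.val + j.val) (by omega)
      have hs0 : suf 0 = v := by
        have h : (⟨i.val + (0 : Fin (m+1)).val, by omega⟩ : Fin (k+1)) = i := by
          ext; simp
        show p _ = v
        rw [h, hi]
      have hslast : suf (Fin.last m) = u := by
        have h : (⟨i.val + (Fin.last m).val, by omega⟩ : Fin (k+1)) = Fin.last k := by
          ext; simp; omega
        show p _ = u
        rw [h, hlast]
      -- closed walk: suffix followed by arc (u, v)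
      have harc : (suf (Fin.last m), v) ∈ A := by rw [hslast]; exact huv
      have hww : IsWalk A (Fin.snoc suf v) := isWalk_snoc hsufw harc
      have hw0 : (Fin.snoc suf v : Fin (m+2) → V) 0 = v := by
        have : ((0 : Fin (m+1)).castSucc) = (0 : Fin (m+2)) := rfl
        rw [← this, Fin.snoc_castSucc, hs0]
      have hwlast : (Fin.snoc suf v : Fin (m+2) → V) (Fin.last (m+1)) = v :=
        Fin.snoc_last _ _
      have hle : walkLen l (Fin.snoc suf v) ≤ 0 := by
        by_contra hpos
        exact hnopos ⟨m+1, Fin.snoc suf v, hww, by omega, by rw [hw0, hwlast],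
          by linarith [lt_of_not_ge hpos]⟩
      rw [walkLen_snoc, hslast] at hle
      have hsufnn : 0 ≤ walkLen l suf := walkLen_nonneg hl suf
      -- prefix of p up to index i
      let pre : Fin (i.val+1) → V := fun j => p ⟨j.val, by omega⟩
      have hprew : IsWalk A pre := by
        intro j
        exact walk_arc hw (j := j.val) (by omega)
      have hpreinj : Function.Injective pre := by
        intro a b hab
        have := hinj hab
        ext
        simpa [Fin.ext_iff] using this
      have hpre0 : pre 0 = s := by
        have h : (⟨(0 : Fin (i.val+1)).val, by omega⟩ : Fin (k+1)) = 0 := by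
          ext; simp
        show p _ = s
        rw [h, h0]
      have hprelast : pre (Fin.last i.val) = v := by
        have h : (⟨(Fin.last i.val).val, by omega⟩ : Fin (k+1)) = i := by
          ext; simp
        show p _ = v
        rw [h, hi]
      -- split walkLen p = walkLen pre + walkLen suf
      have hsplit : walkLen l p = walkLen l pre + walkLen l suf := by
        rw [walkLen_eq l p, walkLen_eq l pre, walkLen_eq l suf]
        have hk : k = i.val + m := by omega
        rw [show Finset.range k = Finset.range (i.val + m) by rw [← hk],
          Finset.sum_range_add]
        congr 1
        · apply Finset.sum_congr rfl
          intro j hj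
          rw [Finset.mem_range] at hj
          rw [dif_pos (show j < k by omega), dif_pos hj]
        · apply Finset.sum_congr rfl
          intro j hj
          rw [Finset.mem_range] at hj
          rw [dif_pos (show i.val + j < k by omega), dif_pos hj]
          rfl
      have hmem : walkLen l pre ∈ pathLens A l s v :=
        ⟨i.val, pre, hprew, hpreinj, hpre0, hprelast, rfl⟩
      have htv := (ht v).2 hmem
      have : t u = walkLen l pre + walkLen l suf := by rw [← hlen, hsplit]
      simp only [ge_iff_le]
      linarith
    · -- v not on the path: extend it
      push_neg at hvmem
      have harc : (p (Fin.last k), v) ∈ A := by rw [hlast]; exact huv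
      have hmem : walkLen l (Fin.snoc p v) ∈ pathLens A l s v := by
        refine ⟨k+1, Fin.snoc p v, isWalk_snoc hw harc, snoc_inj hinj hvmem, ?_, Fin.snoc_last _ _, rfl⟩
        have : ((0 : Fin (k+1)).castSucc) = (0 : Fin (k+2)) := rfl
        rw [← this, Fin.snoc_castSucc, h0]
      have htv := (ht v).2 hmem
      rw [walkLen_snoc, hlast, hlen] at htv
      simp only [ge_iff_le]
      linarith
  refine ⟨hnn, hfeas, ?_⟩
  intro t' hf' hnn'
  apply hc
  intro u
  obtain ⟨k, p, hw, hinj, h0, hlast, hlen⟩ := (ht u).1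
  have h1 := walkLen_le hf' hw
  rw [h0, hlast, hlen] at h1
  have h2 := hnn' s
  linarith
end
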